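/- In the scalar field setting over an (n+1)-dimensional base with n ≥ 1, there exist no multivector fields X, Y such that ι_X ι_Y Ω^{(2,n)} = ω, where ω is the (horizontal) volume (n+1)-form. Abstractly: if Ω is a sum of terms each containing at most n factors from the horizontal subalgebra (i.e. Ω lies in the ideal of forms of horizontal degree ≤ n), then any double contraction ι_X ι_Y Ω has horizontal degree ≤ n and hence cannot equal the horizontal (n+1)-form ω ≠ 0. -/
import Mathlib


/- STATEMENT 15: Let `W = H × V` (horizontal ⊕ vertical splitting). If the
(n+2)-form `Ω` has horizontal degree ≤ n, i.e. it vanishes whenever at least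
`n+1` of its arguments are horizontal (vertical component zero), then no
double contraction `ι_X ι_Y Ω` (a form of the complementary degree `n+1`)
can equal a form `ω` that is nonzero on some horizontal `(n+1)`-tuple. -/

theorem no_inverse_to_volume_form
    {H V : Type*} [AddCommGroup H] [Module ℝ H] [AddCommGroup V] [Module ℝ V]
    {n p q : ℕ}
    (Ω : (Fin (n + 2) → H × V) → ℝ)
    (hΩ : ∀ (args : Fin (n + 2) → H × V) (S : Finset (Fin (n + 2))),
      n + 1 ≤ S.card → (∀ i ∈ S, (args i).2 = 0) → Ω args = 0)
    (ω : (Fin (n + 1) → H × V) → ℝ)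
    (hω : ∃ z : Fin (n + 1) → H × V, (∀ i, (z i).2 = 0) ∧ ω z ≠ 0)
    (X : Fin p → H × V) (Y : Fin q → H × V)
    (h : q + (p + (n + 1)) = n + 2) :
    (fun z : Fin (n + 1) → H × V =>
        Ω fun i => Fin.append Y (Fin.append X z) (Fin.cast h.symm i)) ≠ ω := by
  obtain ⟨z, hz, hωz⟩ := hω
  intro heq
  apply hωz
  rw [← heq]
  simp only
  -- the embedding of the z-slots
  set f : Fin (n + 1) → Fin (n + 2) :=
    fun j => Fin.cast h (Fin.natAdd q (Fin.natAdd p j)) with hf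
  have hfinj : Function.Injective f := by
    intro a b hab
    simpa [hf, Fin.ext_iff] using hab
  refine hΩ _ (Finset.univ.image f) ?_ ?_
  · rw [Finset.card_image_of_injective _ hfinj, Finset.card_univ, Fintype.card_fin]
  · intro i hi
    simp only [Finset.mem_image, Finset.mem_univ, true_and] at hi
    obtain ⟨j, rfl⟩ := hi
    have : Fin.cast h.symm (f j) = Fin.natAdd q (Fin.natAdd p j) := by
      simp [hf, Fin.ext_iff]
    rw [this, Fin.append_right, Fin.append_right]
    exact hz j
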